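/- Let S be an inverse semigroup with zero and define, for a ∈ S and finite B ⊆ a↓, B to be a tight cover of a if for every nonzero x ≤ a there exists b ∈ B with a nonzero common lower bound of x and b. Then every ultrafilter in S is a tight filter: if F is an ultrafilter, a ∈ F, and B is a tight cover of a, then B ∩ F ≠ ∅. -/

import Mathlib

namespace InvPaper

/-- An inverse semigroup: a regular semigroup whose idempotents commute
(equivalently, each element has a unique generalized inverse `sinv`). -/
class InverseSemigroup (S : Type*) extends Semigroup S where
  sinv : S → S
  mul_sinv_mul : ∀ a : S, a * sinv a * a = a
  sinv_mul_sinv : ∀ a : S, sinv a * a * sinv a = sinv a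
  idem_comm : ∀ e f : S, e * e = e → f * f = f → e * f = f * e

open InverseSemigroup

variable {S : Type*}

section Basic
variable [InverseSemigroup S]

/-- `e` is an idempotent. -/
def idem (e : S) : Prop := e * e = e

/-- The natural partial order: `a ≤ b` iff `a = b * e` for some idempotent `e`. -/
def nle (a b : S) : Prop := ∃ e : S, idem e ∧ a = b * e

/-- `s` and `t` are compatible: `s⁻¹t` and `st⁻¹` are idempotents. -/
def compatible (s t : S) : Prop := idem (sinv s * t) ∧ idem (s * sinv t)

/-- `j` is the join (least upper bound) of `a` and `b` w.r.t. the natural partial order. -/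
def isJoin (a b j : S) : Prop :=
  nle a j ∧ nle b j ∧ ∀ c : S, nle a c → nle b c → nle j c

/-- `m` is the meet (greatest lower bound) of `a` and `b`. -/
def isMeet (a b m : S) : Prop :=
  nle m a ∧ nle m b ∧ ∀ z : S, nle z a → nle z b → nle z m

/-- `j` is the least upper bound of the set `A`. -/
def isJoinSet (A : Set S) (j : S) : Prop :=
  (∀ a ∈ A, nle a j) ∧ ∀ c : S, (∀ a ∈ A, nle a c) → nle j c

/-- A filter: a nonempty, downward-directed, upward-closed subset. -/
def IsFilter (F : Set S) : Prop :=
  F.Nonempty ∧ (∀ a ∈ F, ∀ b ∈ F, ∃ c ∈ F, nle c a ∧ nle c b) ∧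
    ∀ a ∈ F, ∀ b : S, nle a b → b ∈ F

/-- An order ideal: a downward-closed subset. -/
def IsOrderIdeal (A : Set S) : Prop := ∀ x ∈ A, ∀ y : S, nle y x → y ∈ A

end Basic

/-- An inverse semigroup with a (multiplicative) zero element. -/
class InverseSemigroupWithZero (S : Type*) extends InverseSemigroup S, Zero S where
  zmul : ∀ a : S, 0 * a = 0
  mulz : ∀ a : S, a * 0 = 0

section WithZero
variable [InverseSemigroupWithZero S]

/-- A proper filter: a filter not containing `0`. -/
def IsProperFilter (F : Set S) : Prop := IsFilter F ∧ (0 : S) ∉ F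

/-- An ultrafilter: a maximal proper filter. -/
def IsUltrafilter (F : Set S) : Prop :=
  IsProperFilter F ∧ ∀ G : Set S, IsProperFilter G → F ⊆ G → G = F

/-- A prime filter: a proper filter `F` such that whenever a join `a ∨ b` exists and
lies in `F`, then `a ∈ F` or `b ∈ F`. -/
def IsPrimeFilter (F : Set S) : Prop :=
  IsProperFilter F ∧ ∀ a b j : S, isJoin a b j → j ∈ F → a ∈ F ∨ b ∈ F

/-- `d(F) = (F⁻¹F)↑`, the upward closure of `{a⁻¹b : a, b ∈ F}`. -/
def dClosure (F : Set S) : Set S :=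
  {x | ∃ a ∈ F, ∃ b ∈ F, nle (InverseSemigroup.sinv a * b) x}

/-- `r(F) = (FF⁻¹)↑`, the upward closure of `{ab⁻¹ : a, b ∈ F}`. -/
def rClosure (F : Set S) : Set S :=
  {x | ∃ a ∈ F, ∃ b ∈ F, nle (a * InverseSemigroup.sinv b) x}

/-- The product of two filters: `F · G = (FG)↑`. -/
def filterMul (F G : Set S) : Set S :=
  {x | ∃ a ∈ F, ∃ b ∈ G, nle (a * b) x}

/-- `A` is ∨-closed: closed under existing joins of finite nonempty compatible subsets. -/
def IsVeeClosed (A : Set S) : Prop :=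
  ∀ Y : Finset S, Y.Nonempty → ↑Y ⊆ A → (∀ a ∈ Y, ∀ b ∈ Y, compatible a b) →
    ∀ j : S, isJoinSet (↑Y : Set S) j → j ∈ A

/-- The ∨-closure `A^∨`: all existing joins of finite nonempty compatible subsets of `A`. -/
def veeClosure (A : Set S) : Set S :=
  {x | ∃ Y : Finset S, Y.Nonempty ∧ ↑Y ⊆ A ∧ (∀ a ∈ Y, ∀ b ∈ Y, compatible a b) ∧
    isJoinSet (↑Y : Set S) x}

/-- A prime order ideal: if every common lower bound of `a` and `b` lies in `P`,
then `a ∈ P` or `b ∈ P`. -/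
def IsPrimeOrderIdeal (P : Set S) : Prop :=
  ∀ a b : S, (∀ z : S, nle z a → nle z b → z ∈ P) → a ∈ P ∨ b ∈ P

/-- The set of prime filters containing `s`. -/
def Xset (s : S) : Set (Set S) := {F | IsPrimeFilter F ∧ s ∈ F}

end WithZero

/-- A distributive inverse semigroup: compatible pairs have joins and
multiplication distributes over these joins. -/
class DistributiveInverseSemigroup (S : Type*) extends InverseSemigroupWithZero S where
  joins_exist : ∀ a b : S, compatible a b → ∃ j : S, isJoin a b j
  mul_distrib_left : ∀ a b j c : S, compatible a b → isJoin a b j →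
    isJoin (c * a) (c * b) (c * j)
  mul_distrib_right : ∀ a b j c : S, compatible a b → isJoin a b j →
    isJoin (a * c) (b * c) (j * c)

/-- A distributive inverse semigroup is Boolean if its idempotents form a generalized
Boolean algebra: relative complements of idempotents exist. -/
def IsBoolean (S : Type*) [DistributiveInverseSemigroup S] : Prop :=
  ∀ e f : S, idem e → idem f → nle e f →
    ∃ g : S, idem g ∧ e * g = 0 ∧ isJoin e g f

/-- A pseudogroup: an inverse semigroup with joins of all nonempty compatible subsets,
over which multiplication distributes. -/
class Pseudogroup (S : Type*) extends InverseSemigroup S where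
  joins_exist : ∀ A : Set S, A.Nonempty → (∀ a ∈ A, ∀ b ∈ A, compatible a b) →
    ∃ j : S, isJoinSet A j
  mul_distrib_left : ∀ (A : Set S) (j c : S), isJoinSet A j →
    isJoinSet ((c * ·) '' A) (c * j)
  mul_distrib_right : ∀ (A : Set S) (j c : S), isJoinSet A j →
    isJoinSet ((· * c) '' A) (j * c)

/-- `B` is a tight cover of `a`: `B ⊆ a↓` is finite, and every nonzero `x ≤ a`
has a nonzero common lower bound with some `b ∈ B`. -/
def IsTightCover {S : Type*} [InverseSemigroupWithZero S] (a : S) (B : Finset S) : Prop :=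
  (∀ b ∈ B, nle b a) ∧
    ∀ x : S, x ≠ 0 → nle x a → ∃ b ∈ B, ∃ z : S, z ≠ 0 ∧ nle z x ∧ nle z b

/-!
If `F` is an ultrafilter and `s ≤ a` for some `a ∈ F`, then `s ∈ F` as soon as `s` has a nonzero
common lower bound with every `t ∈ F`: otherwise the upward closure of the elements `s t⁻¹t`,
`t ∈ F`, would be a proper filter strictly containing `F`. So each `b ∈ B` missing `F` is
separated from some `t_b ∈ F`. A common lower bound `x ∈ F` of `a` and all the `t_b` is nonzero,
and the tight cover gives `b ∈ B` with a nonzero common lower bound of `x` and `b`, which then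
lies below `t_b` as well.
-/

section Order
variable [InverseSemigroup S]

lemma idem_sinv_mul (a : S) : idem (sinv a * a) := by
  show sinv a * a * (sinv a * a) = sinv a * a
  rw [mul_assoc, ← mul_assoc a, mul_sinv_mul]

lemma idem_mul {e f : S} (he : idem e) (hf : idem f) : idem (e * f) := by
  show e * f * (e * f) = e * f
  calc e * f * (e * f) = e * (f * e) * f := by simp only [mul_assoc]
    _ = e * e * (f * f) := by rw [idem_comm f e hf he]; simp only [mul_assoc]
    _ = e * f := by rw [he, hf]

lemma nle_refl (a : S) : nle a a :=
  ⟨sinv a * a, idem_sinv_mul a, by rw [← mul_assoc, mul_sinv_mul]⟩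

lemma nle_trans {a b c : S} (hab : nle a b) (hbc : nle b c) : nle a c := by
  obtain ⟨e, he, rfl⟩ := hab
  obtain ⟨f, hf, rfl⟩ := hbc
  exact ⟨f * e, idem_mul hf he, by rw [mul_assoc]⟩

lemma mul_idem_nle {a e : S} (he : idem e) : nle (a * e) a := ⟨e, he, rfl⟩

lemma nle_mul_left {x y : S} (c : S) (h : nle x y) : nle (c * x) (c * y) := by
  obtain ⟨e, he, rfl⟩ := h
  exact ⟨e, he, by rw [mul_assoc]⟩

lemma nle_mul_idem {a b e : S} (h : nle a b) (he : idem e) : nle (a * e) (b * e) := by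
  obtain ⟨f, hf, rfl⟩ := h
  refine ⟨f, hf, ?_⟩
  rw [mul_assoc, mul_assoc, idem_comm f e hf he]

lemma mul_sinv_mul_eq_of_nle {z t : S} (h : nle z t) : z * (sinv t * t) = z := by
  obtain ⟨f, hf, rfl⟩ := h
  calc t * f * (sinv t * t) = t * (sinv t * t * f) := by
        rw [mul_assoc, idem_comm f _ hf (idem_sinv_mul t)]
    _ = t * f := by rw [← mul_assoc, ← mul_assoc, mul_sinv_mul]

lemma eq_mul_sinv_mul_of_nle {t a : S} (h : nle t a) : t = a * (sinv t * t) := by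
  obtain ⟨f, hf, ht⟩ := h
  have htf : t * f = t := by rw [ht, mul_assoc, hf]
  calc t = a * f * (sinv t * t) := by rw [← ht, ← mul_assoc, mul_sinv_mul]
    _ = a * (sinv t * (t * f)) := by
        rw [mul_assoc, idem_comm f _ hf (idem_sinv_mul t)]; simp only [mul_assoc]
    _ = a * (sinv t * t) := by rw [htf]

lemma sinv_mul_mono {c t : S} (h : nle c t) : nle (sinv c * c) (sinv t * t) := by
  refine ⟨sinv c * c, idem_sinv_mul c, ?_⟩
  rw [idem_comm _ _ (idem_sinv_mul t) (idem_sinv_mul c), mul_assoc, mul_sinv_mul_eq_of_nle h]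

lemma nle_mul_sinv_mul {z s t : S} (hzs : nle z s) (hzt : nle z t) :
    nle z (s * (sinv t * t)) := by
  simpa only [mul_sinv_mul_eq_of_nle hzt] using nle_mul_idem hzs (idem_sinv_mul t)

lemma mul_sinv_mul_nle_of_nle {s t a : S} (hs : nle s a) (ht : nle t a) :
    nle (s * (sinv t * t)) t := by
  obtain ⟨e, he, rfl⟩ := hs
  refine ⟨e, he, ?_⟩
  conv_rhs => rw [eq_mul_sinv_mul_of_nle ht]
  rw [mul_assoc, mul_assoc, idem_comm e _ he (idem_sinv_mul t)]

lemma IsFilter.exists_nle_of_subset {F : Set S} (hF : IsFilter F) (T : Finset S)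
    (hT : ↑T ⊆ F) : ∃ x ∈ F, ∀ t ∈ T, nle x t := by
  classical
  induction T using Finset.induction_on with
  | empty =>
    obtain ⟨x, hx⟩ := hF.1
    exact ⟨x, hx, by simp⟩
  | insert t T _ ih =>
    obtain ⟨x, hxF, hx⟩ := ih (subset_trans (by simp) hT)
    obtain ⟨y, hyF, hyt, hyx⟩ := hF.2.1 t (hT (by simp)) x hxF
    refine ⟨y, hyF, ?_⟩
    simp only [Finset.mem_insert, forall_eq_or_imp]
    exact ⟨hyt, fun u hu => nle_trans hyx (hx u hu)⟩

end Order

section Ultrafilter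
variable [InverseSemigroupWithZero S]

def Overlaps (s t : S) : Prop := ∃ z : S, z ≠ 0 ∧ nle z s ∧ nle z t

lemma eq_zero_of_nle_zero {x : S} (h : nle x (0 : S)) : x = 0 := by
  obtain ⟨e, -, rfl⟩ := h
  exact InverseSemigroupWithZero.zmul e

lemma IsUltrafilter.mem_of_forall_overlaps {F : Set S} (hF : IsUltrafilter F) {a s : S}
    (ha : a ∈ F) (hsa : nle s a) (h : ∀ t ∈ F, Overlaps s t) : s ∈ F := by
  obtain ⟨⟨⟨⟨t₀, ht₀⟩, hdir, hup⟩, h0⟩, hmax⟩ := hF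
  let G : Set S := {x | ∃ t ∈ F, nle (s * (sinv t * t)) x}
  have hG : IsProperFilter G := by
    refine ⟨⟨⟨_, t₀, ht₀, nle_refl _⟩, ?_, ?_⟩, ?_⟩
    · rintro x₁ ⟨t₁, ht₁, h₁⟩ x₂ ⟨t₂, ht₂, h₂⟩
      obtain ⟨c, hc, hc₁, hc₂⟩ := hdir t₁ ht₁ t₂ ht₂
      exact ⟨_, ⟨c, hc, nle_refl _⟩, nle_trans (nle_mul_left s (sinv_mul_mono hc₁)) h₁,
        nle_trans (nle_mul_left s (sinv_mul_mono hc₂)) h₂⟩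
    · rintro x ⟨t, ht, hx⟩ y hxy
      exact ⟨t, ht, nle_trans hx hxy⟩
    · rintro ⟨t, ht, hst⟩
      obtain ⟨z, hz, hzs, hzt⟩ := h t ht
      exact hz (eq_zero_of_nle_zero (nle_trans (nle_mul_sinv_mul hzs hzt) hst))
  have hFG : F ⊆ G := fun t ht => by
    obtain ⟨c, hc, hct, hca⟩ := hdir t ht a ha
    exact ⟨c, hc, nle_trans (mul_sinv_mul_nle_of_nle hsa hca) hct⟩
  rw [← hmax G hG hFG]
  exact ⟨a, ha, mul_idem_nle (idem_sinv_mul a)⟩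

end Ultrafilter

/-- Every ultrafilter is a tight filter: if `a ∈ F` and `B` is a tight
cover of `a`, then `B` meets `F`. -/
theorem stmt19 {S : Type*} [InverseSemigroupWithZero S] (F : Set S)
    (hF : IsUltrafilter F) (a : S) (ha : a ∈ F) (B : Finset S)
    (hB : IsTightCover a B) : ∃ b ∈ B, b ∈ F := by
  classical
  by_contra! hBF
  have hsep : ∀ b ∈ B, ∃ t ∈ F, ¬ Overlaps b t := fun b hb => by
    by_contra! h
    exact hBF b hb (hF.mem_of_forall_overlaps ha (hB.1 b hb) h)
  choose! t htF hbt using hsep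
  obtain ⟨x, hxF, hx⟩ := hF.1.1.exists_nle_of_subset (insert a (B.image t)) (by
    simp only [Finset.coe_insert, Finset.coe_image, Set.insert_subset_iff, Set.image_subset_iff]
    exact ⟨ha, htF⟩)
  have hx0 : x ≠ 0 := ne_of_mem_of_not_mem hxF hF.1.2
  obtain ⟨b, hb, z, hz0, hzx, hzb⟩ := hB.2 x hx0 (hx a (Finset.mem_insert_self _ _))
  have hxt : nle x (t b) := hx _ (Finset.mem_insert_of_mem (Finset.mem_image_of_mem t hb))
  exact hbt b hb ⟨z, hz0, hzb, nle_trans hzx hxt⟩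

end InvPaper
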